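/- Suppose f is a transduction that is invariant under permutations, u, v, w are data words, and π, π' are permutations on D. If π and π' coincide on those data values that are f-influencing in u·v, then π(f(u̲ | v | w̲)) = f(π(u)̲ | π(v) | π'(w)̲). -/

import Mathlib

namespace SSRT

/-- Elements of a factored output: either a retained output triple
(letter, data value, origin — integer origins allow shifting by `z`),
or one of the placeholder marks `(*,*,left)`, `(*,*,middle)`, `(*,*,right)`. -/
inductive FOElem (G D : Type) where
  | tri (g : G) (d : D) (o : ℤ)
  | left
  | middle
  | right
  deriving DecidableEq

namespace FOElem

def isTri {G D : Type} : FOElem G D → Bool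
  | .tri _ _ _ => true
  | _ => false

def isMark {G D : Type} (e : FOElem G D) : Bool := !e.isTri

end FOElem

/-- Data words over the input alphabet `A` with data from `D`. -/
abbrev DataWord (A D : Type) := List (A × D)

/-- Data words with origin information over the output alphabet `G`;
positions of the input are numbered 1,…,n. -/
abbrev OutWord (G D : Type) := List (G × D × ℕ)

/-- A transduction. -/
abbrev Transduction (A G D : Type) := DataWord A D → OutWord G D

variable {A G D : Type}

/-- Apply a permutation of data values to a data word. -/
def permW (π : Equiv.Perm D) (u : DataWord A D) : DataWord A D :=
  u.map fun p => (p.1, π p.2)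

/-- Apply a permutation of data values to an output word. -/
def permOut (π : Equiv.Perm D) (w : OutWord G D) : OutWord G D :=
  w.map fun t => (t.1, π t.2.1, t.2.2)

/-- Apply a permutation of data values to a factored output
(placeholder marks are unchanged). -/
def permFO (π : Equiv.Perm D) : List (FOElem G D) → List (FOElem G D) :=
  List.map fun e => match e with
    | .tri g d o => .tri g (π d) o
    | .left => .left
    | .middle => .middle
    | .right => .right

/-- Shift the origin of every retained triple by `z`. -/
def foShift (z : ℤ) : List (FOElem G D) → List (FOElem G D) :=
  List.map fun e => match e with
    | .tri g d o => .tri g d (o + z)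
    | .left => .left
    | .middle => .middle
    | .right => .right

/-- `f` is invariant under permutations. -/
def PermInvariant (f : Transduction A G D) : Prop :=
  ∀ (π : Equiv.Perm D) (u : DataWord A D), f (permW π u) = permOut π (f u)

/-- `f` is without data peeking: every data value output from origin `o`
already occurs in the input at some position `≤ o`. -/
def NoDataPeeking (f : Transduction A G D) : Prop :=
  ∀ (w : DataWord A D) (t : G × D × ℕ), t ∈ f w →
    ∃ (i : ℕ) (a : A), w[i]? = some (a, t.2.1) ∧ i + 1 ≤ t.2.2

/-- `f` has linear blow up. -/
def LinearBlowUp (f : Transduction A G D) : Prop :=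
  ∃ K : ℕ, ∀ (w : DataWord A D) (o : ℕ), 1 ≤ o → o ≤ w.length →
    ((f w).filter fun t => t.2.2 == o).length ≤ K

variable [DecidableEq G] [DecidableEq D]

/-- Merge consecutive occurrences of equal placeholder marks into one. -/
def collapse : List (FOElem G D) → List (FOElem G D)
  | [] => []
  | [a] => [a]
  | a :: b :: rest =>
      if a = b ∧ a.isMark then collapse (b :: rest)
      else a :: collapse (b :: rest)

/-- The factored output `f(u̲ ∣ v)`. -/
def leftFac (f : Transduction A G D) (u v : DataWord A D) : List (FOElem G D) :=
  collapse ((f (u ++ v)).map fun t =>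
    if t.2.2 ≤ u.length then FOElem.left else FOElem.tri t.1 t.2.1 (t.2.2 : ℤ))

/-- The factored output `f(u ∣ v̲)`. -/
def rightFac (f : Transduction A G D) (u v : DataWord A D) : List (FOElem G D) :=
  collapse ((f (u ++ v)).map fun t =>
    if u.length < t.2.2 then FOElem.right else FOElem.tri t.1 t.2.1 (t.2.2 : ℤ))

/-- The factored output `f(u̲ ∣ v ∣ w̲)`. -/
def threeFac (f : Transduction A G D) (u v w : DataWord A D) : List (FOElem G D) :=
  collapse ((f (u ++ v ++ w)).map fun t =>
    if t.2.2 ≤ u.length then FOElem.left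
    else if t.2.2 ≤ u.length + v.length then FOElem.tri t.1 t.2.1 (t.2.2 : ℤ)
    else FOElem.right)

/-- The factored output `f(u̲ ∣ v̲ ∣ w̲)`. -/
def allFac (f : Transduction A G D) (u v w : DataWord A D) : List (FOElem G D) :=
  collapse ((f (u ++ v ++ w)).map fun t =>
    if t.2.2 ≤ u.length then FOElem.left
    else if t.2.2 ≤ u.length + v.length then FOElem.middle
    else FOElem.right)

/-- `u[d/d']`: replace every occurrence of the data value `d` by `d'`. -/
def replaceD (u : DataWord A D) (d d' : D) : DataWord A D :=
  u.map fun p => (p.1, if p.2 = d then d' else p.2)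

/-- Isomorphism of data words: same length, same letters, and the same
equalities among the data values at the various positions. -/
def Iso (u u' : DataWord A D) : Prop :=
  u.length = u'.length ∧
  (∀ i : ℕ, u[i]?.map Prod.fst = u'[i]?.map Prod.fst) ∧
  (∀ i j : ℕ, (u[i]?.map Prod.snd = u[j]?.map Prod.snd) ↔
          (u'[i]?.map Prod.snd = u'[j]?.map Prod.snd))

/-- `d'` is a safe replacement for `d` in `u`. -/
def SafeRepl (d d' : D) (u : DataWord A D) : Prop := Iso (replaceD u d d') u

def OccursIn (d : D) (u : DataWord A D) : Prop := ∃ p ∈ u, p.2 = d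

/-- `d` is `f`-memorable in `u`. -/
def Memorable (f : Transduction A G D) (d : D) (u : DataWord A D) : Prop :=
  ∃ (v : DataWord A D) (d' : D), SafeRepl d d' u ∧
    leftFac f (replaceD u d d') v ≠ leftFac f u v

/-- `d` is `f`-vulnerable in `u`. -/
def Vulnerable (f : Transduction A G D) (d : D) (u : DataWord A D) : Prop :=
  ∃ (u' v : DataWord A D) (d' : D), ¬ OccursIn d u' ∧
    SafeRepl d d' (u ++ u' ++ v) ∧
    rightFac f (u ++ u') (replaceD v d d') ≠ rightFac f (u ++ u') v

/-- `d` is `f`-influencing in `u`. -/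
def Influencing (f : Transduction A G D) (d : D) (u : DataWord A D) : Prop :=
  Memorable f d u ∨ Vulnerable f d u

/-- The last occurrence of `d` in `u` is at (0-based) index `i`. -/
def IsLastOcc (u : DataWord A D) (d : D) (i : ℕ) : Prop :=
  (∃ a : A, u[i]? = some (a, d)) ∧ ∀ j : ℕ, i < j → ∀ p : A × D, u[j]? = some p → p.2 ≠ d

/-- `d` is fresher than `e` in `u`: the last occurrence of `d` in `u` is
strictly to the right of the last occurrence of `e`. -/
def Fresher (u : DataWord A D) (d e : D) : Prop :=
  ∃ i j : ℕ, IsLastOcc u d i ∧ IsLastOcc u e j ∧ j < i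

/-- `l` is the sequence of all `f`-influencing values of `u`, listed freshest
first: the `i`-th element (1-based) is the `i`-th `f`-influencing value of `u`.
(The paper writes this sequence in the reverse direction, as `d_m ⋯ d_1`.) -/
def IsIflSeq (f : Transduction A G D) (u : DataWord A D) (l : List D) : Prop :=
  (∀ d, d ∈ l ↔ Influencing f d u) ∧ l.Nodup ∧
  ∀ (i j : ℕ) (hi : i < l.length) (hj : j < l.length), i < j →
    Fresher u (l.get ⟨i, hi⟩) (l.get ⟨j, hj⟩)

/-- The type annotation of an influencing value. -/
inductive IflType where
  | vm | m | v
  deriving DecidableEq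

def HasIflType (f : Transduction A G D) (u : DataWord A D) (d : D) :
    IflType → Prop
  | .vm => Memorable f d u ∧ Vulnerable f d u
  | .m => Memorable f d u ∧ ¬ Vulnerable f d u
  | .v => Vulnerable f d u ∧ ¬ Memorable f d u

/-- `al` is `aifl_f(u)` (listed freshest first). -/
def IsAiflSeq (f : Transduction A G D) (u : DataWord A D)
    (al : List (D × IflType)) : Prop :=
  IsIflSeq f u (al.map Prod.fst) ∧ ∀ p ∈ al, HasIflType f u p.1 p.2

/-- The equivalence `u1 ≡_f u2`. -/
def FEquiv (f : Transduction A G D) (u1 u2 : DataWord A D) : Prop :=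
  ∃ π : Equiv.Perm D,
    (∀ v, foShift ((u1.length : ℤ) - (u2.length : ℤ))
        (leftFac f (permW π u2) v) = leftFac f u1 v) ∧
    (∀ al, IsAiflSeq f (permW π u2) al ↔ IsAiflSeq f u1 al) ∧
    (∀ u v1 v2, (rightFac f (u1 ++ u) v1 = rightFac f (u1 ++ u) v2) ↔
        (rightFac f (permW π u2 ++ u) v1 = rightFac f (permW π u2 ++ u) v2))

/-- `≡_f` has finitely many equivalence classes. -/
def FEquivFiniteIndex (f : Transduction A G D) : Prop :=
  ∃ S : Set (DataWord A D), S.Finite ∧ ∀ u, ∃ r ∈ S, FEquiv f r u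

/-- `E` is an equalizing scheme for `f` with associated sequence `δ 1, δ 2, ⋯`
(the value `δ 0` is irrelevant here): for every data word `u`, the `i`-th
`f`-influencing value of `E(u)(u)` is `δ i`. -/
def IsEqualizingSchemeWith (f : Transduction A G D)
    (E : DataWord A D → Equiv.Perm D) (δ : ℕ → D) : Prop :=
  ∀ (u : DataWord A D) (l : List D), IsIflSeq f (permW (E u) u) l →
    ∀ (i : ℕ) (h : i < l.length), l.get ⟨i, h⟩ = δ (i + 1)

def IsEqualizingScheme (f : Transduction A G D)
    (E : DataWord A D → Equiv.Perm D) : Prop :=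
  ∃ δ : ℕ → D, IsEqualizingSchemeWith f E δ

/-- `v1 ≡_f^E v2`. -/
def REquiv (f : Transduction A G D) (E : DataWord A D → Equiv.Perm D)
    (v1 v2 : DataWord A D) : Prop :=
  ∀ u, rightFac f (permW (E u) u) v1 = rightFac f (permW (E u) u) v2

/-- `≡_f^E` has finitely many equivalence classes. -/
def REquivFiniteIndex (f : Transduction A G D)
    (E : DataWord A D → Equiv.Perm D) : Prop :=
  ∃ S : Set (DataWord A D), S.Finite ∧ ∀ v, ∃ r ∈ S, REquiv f E r v

/-- The blocks of a factored output: the maximal infixes consisting of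
retained triples, in order. -/
def triBlocks (l : List (FOElem G D)) : List (List (FOElem G D)) :=
  (l.splitOnP fun e => !e.isTri).filter fun b => !b.isEmpty

/-- Helper for concretizing non-right blocks: walk `f(u̲ ∣ v̲ ∣ w̲)` and
substitute the `i`-th occurrence of the left mark by the `i`-th left block
(taken from `L`) and the `j`-th occurrence of the middle mark by the `j`-th
middle block (taken from `M`); right marks are turned into separators. -/
def annotateNR (L M : List (List (FOElem G D))) :
    List (FOElem G D) → ℕ → ℕ → List (Option (List (FOElem G D)))
  | [], _, _ => []
  | .left :: rest, i, j => some (L.getD i []) :: annotateNR L M rest (i + 1) j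
  | .middle :: rest, i, j => some (M.getD j []) :: annotateNR L M rest i (j + 1)
  | .right :: rest, i, j => none :: annotateNR L M rest i j
  | .tri g d o :: rest, i, j => some [.tri g d o] :: annotateNR L M rest i j

/-- The concretizations of the non-right blocks of `f(u̲ ∣ v̲ ∣ w̲)`, in order:
the concretization of a non-right block is the concatenation of the
concretizations of the left blocks (taken from `f(u ∣ v·w̲)`) and the middle
blocks (taken from `f(u̲ ∣ v ∣ w̲)`) occurring in it. -/
def concretizedNRBlocks (f : Transduction A G D) (u v w : DataWord A D) :
    List (List (FOElem G D)) :=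
  (((annotateNR (triBlocks (rightFac f u (v ++ w))) (triBlocks (threeFac f u v w))
        (allFac f u v w) 0 0).splitOnP fun o => o.isNone).filter
      fun grp => !grp.isEmpty).map fun grp => grp.reduceOption.flatten

/-- `π` tracks influencing values (relative to the sequence `δ`) on `w`:
the `i`-th `f`-influencing value of `w` is `π (δ i)`. -/
def TracksInfluencing (f : Transduction A G D) (δ : ℕ → D) (π : Equiv.Perm D)
    (w : DataWord A D) : Prop :=
  ∀ l, IsIflSeq f w l → ∀ (i : ℕ) (h : i < l.length), l.get ⟨i, h⟩ = π (δ (i + 1))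

end SSRT

open SSRT

namespace SSRTAux

open SSRT

variable {A G D : Type} [DecidableEq D] [DecidableEq G]

/-- elementwise permutation on FOElem -/
def pF (π : Equiv.Perm D) : FOElem G D → FOElem G D
  | .tri g d o => .tri g (π d) o
  | .left => .left
  | .middle => .middle
  | .right => .right

lemma permFO_eq_map (π : Equiv.Perm D) (l : List (FOElem G D)) :
    permFO π l = l.map (pF π) := rfl

lemma pF_inj (π : Equiv.Perm D) {a b : FOElem G D} : pF π a = pF π b ↔ a = b := by
  cases a <;> cases b <;> simp [pF]

lemma isMark_pF (π : Equiv.Perm D) (a : FOElem G D) : (pF π a).isMark = a.isMark := by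
  cases a <;> rfl

lemma pF_symm_pF (π : Equiv.Perm D) (a : FOElem G D) : pF π.symm (pF π a) = a := by
  cases a <;> simp [pF]

lemma collapse_map_pF (π : Equiv.Perm D) : ∀ l : List (FOElem G D),
    collapse (l.map (pF π)) = (collapse l).map (pF π)
  | [] => rfl
  | [a] => rfl
  | a :: b :: r => by
      simp only [List.map_cons]
      rw [collapse, collapse]
      by_cases h : a = b ∧ a.isMark
      · rw [if_pos ⟨by rw [h.1], by rw [isMark_pF]; exact h.2⟩, if_pos h,
          ← List.map_cons, collapse_map_pF π (b :: r)]
      · rw [if_neg (by rw [pF_inj, isMark_pF]; exact h), if_neg h, ← List.map_cons,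
          collapse_map_pF π (b :: r), List.map_cons]

lemma permFO_collapse (π : Equiv.Perm D) (l : List (FOElem G D)) :
    collapse (permFO π l) = permFO π (collapse l) := by
  rw [permFO_eq_map, permFO_eq_map, collapse_map_pF]

lemma permFO_left_inv (π : Equiv.Perm D) (l : List (FOElem G D)) :
    permFO π.symm (permFO π l) = l := by
  rw [permFO_eq_map, permFO_eq_map, List.map_map]
  have : (pF (G := G) (D := D) π.symm ∘ pF π) = id := funext (pF_symm_pF π)
  rw [this, List.map_id]

lemma permFO_ne (π : Equiv.Perm D) {l1 l2 : List (FOElem G D)} (h : l1 ≠ l2) :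
    permFO π l1 ≠ permFO π l2 := fun he => h (by
  rw [← permFO_left_inv π l1, he, permFO_left_inv])

lemma permW_append (π : Equiv.Perm D) (x y : DataWord A D) :
    permW π (x ++ y) = permW π x ++ permW π y := List.map_append

lemma permW_length (π : Equiv.Perm D) (x : DataWord A D) :
    (permW π x).length = x.length := List.length_map _

lemma permW_symm_permW (π : Equiv.Perm D) (x : DataWord A D) :
    permW π.symm (permW π x) = x := by
  simp only [permW, List.map_map]
  rw [List.map_congr_left (fun p (_ : p ∈ x) => by simp :
    ∀ p ∈ x, ((fun p : A × D => (p.1, π.symm p.2)) ∘ fun p => (p.1, π p.2)) p = p),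
    List.map_id']

lemma replaceD_perm (π : Equiv.Perm D) (x : DataWord A D) (d d' : D) :
    replaceD (permW π x) (π d) (π d') = permW π (replaceD x d d') := by
  simp only [replaceD, permW, List.map_map]
  refine List.map_congr_left fun p _ => ?_
  by_cases h : p.2 = d <;> simp [Function.comp, h, Equiv.apply_eq_iff_eq]

lemma iso_perm (π : Equiv.Perm D) {x y : DataWord A D} (h : Iso x y) :
    Iso (permW π x) (permW π y) := by
  obtain ⟨h1, h2, h3⟩ := h
  refine ⟨by simp [permW_length, h1], fun i => ?_, fun i j => ?_⟩
  · simp only [permW, List.getElem?_map, Option.map_map]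
    have : (Prod.fst ∘ fun p : A × D => (p.1, π p.2)) = Prod.fst := rfl
    rw [this]; exact h2 i
  · have key : ∀ (z : DataWord A D) (i : ℕ),
        (permW π z)[i]?.map Prod.snd = Option.map π (z[i]?.map Prod.snd) := by
      intro z i
      simp only [permW, List.getElem?_map, Option.map_map]
      rfl
    rw [key, key, key, key,
      (Option.map_injective π.injective).eq_iff,
      (Option.map_injective π.injective).eq_iff]
    exact h3 i j

lemma safeRepl_perm (π : Equiv.Perm D) {x : DataWord A D} {d d' : D}
    (h : SafeRepl d d' x) : SafeRepl (π d) (π d') (permW π x) := by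
  unfold SafeRepl at *
  rw [replaceD_perm]
  exact iso_perm π h

lemma occursIn_perm (π : Equiv.Perm D) {d : D} {x : DataWord A D}
    (h : OccursIn (π d) (permW π x)) : OccursIn d x := by
  obtain ⟨p, hp, hpd⟩ := h
  simp only [permW, List.mem_map] at hp
  obtain ⟨q, hq, rfl⟩ := hp
  exact ⟨q, hq, π.injective hpd⟩

lemma leftFac_perm {f : Transduction A G D} (hperm : PermInvariant f)
    (π : Equiv.Perm D) (x y : DataWord A D) :
    leftFac f (permW π x) (permW π y) = permFO π (leftFac f x y) := by
  rw [leftFac, leftFac, ← permW_append, hperm, ← permFO_collapse]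
  congr 1
  rw [permFO_eq_map, permOut, List.map_map, List.map_map]
  refine List.map_congr_left fun t _ => ?_
  by_cases hc : t.2.2 ≤ x.length <;>
    simp [Function.comp, permW_length, hc, pF]

lemma rightFac_perm {f : Transduction A G D} (hperm : PermInvariant f)
    (π : Equiv.Perm D) (x y : DataWord A D) :
    rightFac f (permW π x) (permW π y) = permFO π (rightFac f x y) := by
  rw [rightFac, rightFac, ← permW_append, hperm, ← permFO_collapse]
  congr 1
  rw [permFO_eq_map, permOut, List.map_map, List.map_map]
  refine List.map_congr_left fun t _ => ?_
  by_cases hc : x.length < t.2.2 <;>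
    simp [Function.comp, permW_length, hc, pF]

lemma threeFac_perm {f : Transduction A G D} (hperm : PermInvariant f)
    (π : Equiv.Perm D) (x y z : DataWord A D) :
    threeFac f (permW π x) (permW π y) (permW π z) = permFO π (threeFac f x y z) := by
  rw [threeFac, threeFac, ← permW_append, ← permW_append, hperm, ← permFO_collapse]
  congr 1
  rw [permFO_eq_map, permOut, List.map_map, List.map_map]
  refine List.map_congr_left fun t _ => ?_
  by_cases hc : t.2.2 ≤ x.length
  · simp [Function.comp, permW_length, hc, pF]
  · by_cases hc2 : t.2.2 ≤ x.length + y.length <;>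
      simp [Function.comp, permW_length, hc, hc2, pF]

lemma memorable_perm {f : Transduction A G D} (hperm : PermInvariant f)
    (π : Equiv.Perm D) {d : D} {x : DataWord A D} (h : Memorable f d x) :
    Memorable f (π d) (permW π x) := by
  obtain ⟨v, d', hsafe, hne⟩ := h
  refine ⟨permW π v, π d', safeRepl_perm π hsafe, ?_⟩
  rw [replaceD_perm, leftFac_perm hperm, leftFac_perm hperm]
  exact permFO_ne π hne

lemma vulnerable_perm {f : Transduction A G D} (hperm : PermInvariant f)
    (π : Equiv.Perm D) {d : D} {x : DataWord A D} (h : Vulnerable f d x) :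
    Vulnerable f (π d) (permW π x) := by
  obtain ⟨u', v, d', hocc, hsafe, hne⟩ := h
  refine ⟨permW π u', permW π v, π d', fun hc => hocc (occursIn_perm π hc), ?_, ?_⟩
  · rw [← permW_append, ← permW_append]
    exact safeRepl_perm π hsafe
  · rw [← permW_append, replaceD_perm, rightFac_perm hperm, rightFac_perm hperm]
    exact permFO_ne π hne

lemma influencing_perm {f : Transduction A G D} (hperm : PermInvariant f)
    (π : Equiv.Perm D) {d : D} {x : DataWord A D} (h : Influencing f d x) :
    Influencing f (π d) (permW π x) :=
  h.elim (fun hm => Or.inl (memorable_perm hperm π hm))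
    (fun hv => Or.inr (vulnerable_perm hperm π hv))


----------------------------------------------------------------
-- collapse/map machinery for threeFac-from-rightFac
----------------------------------------------------------------

lemma collapse_cons : ∀ (r : List (FOElem G D)) (x : FOElem G D),
    ∃ t, collapse (x :: r) = x :: t
  | [], x => ⟨[], rfl⟩
  | b :: r, x => by
      by_cases h : x = b ∧ x.isMark
      · obtain ⟨t, ht⟩ := collapse_cons r b
        exact ⟨t, by rw [collapse, if_pos h, ht, h.1]⟩
      · exact ⟨collapse (b :: r), by rw [collapse, if_neg h]⟩

lemma collapse_cons₂ (x y : FOElem G D) (s : List (FOElem G D)) :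
    collapse (x :: y :: s) =
      if x = y ∧ x.isMark then collapse (y :: s) else x :: collapse (y :: s) := by
  rw [collapse.eq_def]

lemma collapse_map_collapse (g : FOElem G D → FOElem G D)
    (hg : ∀ e : FOElem G D, e.isMark → g e = e) :
    ∀ l : List (FOElem G D), collapse ((collapse l).map g) = collapse (l.map g)
  | [] => rfl
  | [a] => rfl
  | a :: b :: r => by
      by_cases h : a = b ∧ a.isMark
      · have hga : g a = a := hg a h.2
        have hg2 : g a = g b ∧ (g a).isMark := by
          rw [hga, ← h.1, hga]
          exact ⟨rfl, h.2⟩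
        rw [collapse_cons₂ a b r, if_pos h, collapse_map_collapse g hg (b :: r)]
        simp only [List.map_cons]
        rw [collapse_cons₂ (g a) (g b), if_pos hg2]
      · obtain ⟨t, ht⟩ := collapse_cons r b
        have IH := collapse_map_collapse g hg (b :: r)
        rw [ht] at IH
        simp only [List.map_cons] at IH
        rw [collapse_cons₂ a b r, if_neg h, ht]
        simp only [List.map_cons]
        by_cases h2 : g a = g b ∧ (g a).isMark
        · rw [collapse_cons₂ (g a) (g b) (List.map g t), if_pos h2,
            collapse_cons₂ (g a) (g b) (List.map g r), if_pos h2, IH]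
        · rw [collapse_cons₂ (g a) (g b) (List.map g t), if_neg h2,
            collapse_cons₂ (g a) (g b) (List.map g r), if_neg h2, IH]

lemma threeFac_eq_of_rightFac (f : Transduction A G D) (a b x y : DataWord A D)
    (h : rightFac f (a ++ b) x = rightFac f (a ++ b) y) :
    threeFac f a b x = threeFac f a b y := by
  set g : FOElem G D → FOElem G D := fun e => match e with
    | .tri gg d o => if o ≤ (a.length : ℤ) then .left else .tri gg d o
    | e => e with hgdef
  have hg : ∀ e : FOElem G D, e.isMark → g e = e := by
    intro e he; cases e <;> simp [FOElem.isMark, FOElem.isTri] at he ⊢ <;> rfl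
  have key : ∀ z : DataWord A D,
      threeFac f a b z = collapse ((rightFac f (a ++ b) z).map g) := by
    intro z
    rw [threeFac, rightFac, collapse_map_collapse g hg, List.map_map]
    congr 1
    refine List.map_congr_left fun t _ => ?_
    simp only [Function.comp, List.length_append]
    by_cases h1 : a.length + b.length < t.2.2
    · rw [if_pos h1]
      have : ¬ t.2.2 ≤ a.length := by omega
      rw [if_neg this]
      have : ¬ t.2.2 ≤ a.length + b.length := by omega
      rw [if_neg this]
    · rw [if_neg h1]
      by_cases h2 : t.2.2 ≤ a.length
      · rw [if_pos h2]
        show _ = g (FOElem.tri t.1 t.2.1 (t.2.2 : ℤ))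
        rw [hgdef]
        simp only []
        rw [if_pos (by exact_mod_cast h2)]
      · rw [if_neg h2, if_pos (by omega)]
        show _ = g (FOElem.tri t.1 t.2.1 (t.2.2 : ℤ))
        rw [hgdef]
        simp only []
        rw [if_neg (by exact_mod_cast h2)]
  rw [key, key, h]

----------------------------------------------------------------
-- safe replacement with a fresh value, and the chain lemma
----------------------------------------------------------------

lemma safe_of_fresh (Y : DataWord A D) (d d' : D) (h : ∀ p ∈ Y, p.2 ≠ d') :
    SafeRepl d d' Y := by
  refine ⟨by simp [replaceD], fun i => ?_, fun i j => ?_⟩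
  · cases hY : Y[i]? <;> simp [replaceD, List.getElem?_map, hY]
  · have hmem : ∀ {k : ℕ} {p : A × D}, Y[k]? = some p → p.2 ≠ d' :=
      fun hk => h _ (List.mem_of_getElem? hk)
    cases hYi : Y[i]? with
    | none => cases hYj : Y[j]? <;>
        simp [replaceD, List.getElem?_map, hYi, hYj]
    | some p =>
      cases hYj : Y[j]? with
      | none => simp [replaceD, List.getElem?_map, hYi, hYj]
      | some q =>
        simp only [replaceD, List.getElem?_map, hYi, hYj, Option.map_some,
          Option.some.injEq]
        have hp := hmem hYi
        have hq := hmem hYj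
        constructor
        · intro he
          by_cases h1 : p.2 = d <;> by_cases h2 : q.2 = d
          · rw [h1, h2]
          · rw [if_pos h1, if_neg h2] at he; exact absurd he.symm hq
          · rw [if_neg h1, if_pos h2] at he; exact absurd he hp
          · rwa [if_neg h1, if_neg h2] at he
        · intro he; rw [he]

lemma rightFac_replace_fresh (f : Transduction A G D) (M x : DataWord A D)
    (d d' : D) (hnv : ¬ Vulnerable f d M)
    (h1 : ∀ q ∈ M, q.2 ≠ d') (h2 : ∀ q ∈ x, q.2 ≠ d') :
    rightFac f M (replaceD x d d') = rightFac f M x := by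
  by_contra hne
  refine hnv ⟨[], x, d', by simp [OccursIn], ?_, ?_⟩
  · have : M ++ [] ++ x = M ++ x := by simp
    rw [this]
    exact safe_of_fresh (M ++ x) d d' (by
      intro p hp
      rcases List.mem_append.1 hp with hp | hp
      · exact h1 p hp
      · exact h2 p hp)
  · simpa using hne

lemma chain (f : Transduction A G D) (M : DataWord A D) :
    ∀ (ps : List (D × D)) (x : DataWord A D),
    (∀ p ∈ ps, ¬ Vulnerable f p.1 M) →
    (ps.map Prod.snd).Nodup →
    (∀ p ∈ ps, ∀ q ∈ M, q.2 ≠ p.2) →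
    (∀ p ∈ ps, ∀ q ∈ x, q.2 ≠ p.2) →
    rightFac f M (ps.foldl (fun y p => replaceD y p.1 p.2) x) = rightFac f M x
  | [], x, _, _, _, _ => rfl
  | p :: ps, x, h1, h2, h3, h4 => by
      rw [List.foldl_cons]
      have hstep : rightFac f M (replaceD x p.1 p.2) = rightFac f M x :=
        rightFac_replace_fresh f M x p.1 p.2 (h1 p (by simp))
          (h3 p (by simp)) (h4 p (by simp))
      rw [chain f M ps (replaceD x p.1 p.2)
        (fun q hq => h1 q (List.mem_cons_of_mem p hq))
        ((List.nodup_cons.1 h2).2)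
        (fun q hq => h3 q (List.mem_cons_of_mem p hq))
        (fun q hq r hr => ?_), hstep]
      simp only [replaceD, List.mem_map] at hr
      obtain ⟨s, hs, rfl⟩ := hr
      dsimp only
      by_cases hsd : s.2 = p.1
      · rw [if_pos hsd]
        intro hc
        exact (List.nodup_cons.1 h2).1 (by
          rw [hc]
          exact List.mem_map_of_mem (f := Prod.snd) hq)
      · rw [if_neg hsd]
        exact h4 q (List.mem_cons_of_mem p hq) s hs


----------------------------------------------------------------
-- fold machinery
----------------------------------------------------------------

/-- one replacement step on a single value -/
def step (c : D) (p : D × D) : D := if c = p.1 then p.2 else c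

lemma foldl_replaceD : ∀ (ps : List (D × D)) (x : DataWord A D),
    ps.foldl (fun y p => replaceD y p.1 p.2) x = x.map fun q => (q.1, ps.foldl step q.2)
  | [], x => by
      simp only [List.foldl_nil]
      exact (List.map_congr_left fun q _ => rfl).trans (List.map_id' x) |>.symm
  | p :: ps, x => by
      rw [List.foldl_cons, foldl_replaceD ps (replaceD x p.1 p.2)]
      simp only [replaceD, List.map_map]
      refine List.map_congr_left fun q _ => ?_
      rfl

lemma foldl_step_const : ∀ (ps : List (D × D)) (c : D),
    (∀ p ∈ ps, c ≠ p.1) → ps.foldl step c = c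
  | [], c, _ => rfl
  | p :: ps, c, h => by
      rw [List.foldl_cons, step, if_neg (h p (by simp))]
      exact foldl_step_const ps c fun q hq => h q (List.mem_cons_of_mem p hq)

lemma fold_point (σ : Equiv.Perm D) :
    ∀ (L es : List D) (d : D), L.length = es.length →
    (∀ e ∈ es, ∀ c ∈ L, e ≠ c ∧ e ≠ σ c) →
    (d ∈ L ∨ σ d = d) →
    (L.zip es).foldl step d = ((L.map σ).zip es).foldl step (σ d)
  | [], es, d, _, _, hd => by
      rcases hd with hd | hd
      · exact absurd hd (List.not_mem_nil)
      · simp [hd]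
  | c :: L, [], d, hlen, _, _ => by simp at hlen
  | c :: L, e :: es, d, hlen, hfr, hd => by
      simp only [List.map_cons, List.zip_cons_cons, List.foldl_cons]
      by_cases hdc : d = c
      · rw [step, if_pos hdc, step, if_pos (by rw [hdc])]
        have h1 : (L.zip es).foldl step e = e :=
          foldl_step_const _ e fun p hp =>
            (hfr e (by simp) p.1 (List.mem_cons_of_mem c (List.of_mem_zip hp).1)).1
        have h2 : ((L.map σ).zip es).foldl step e = e := by
          refine foldl_step_const _ e fun p hp => ?_
          have h1 := (List.of_mem_zip hp).1
          obtain ⟨c', hc', heq⟩ := List.mem_map.1 h1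
          rw [← heq]
          exact (hfr e (by simp) c' (List.mem_cons_of_mem c hc')).2
        rw [h1, h2]
      · rw [step, if_neg hdc, step, if_neg (fun hc => hdc (σ.injective hc))]
        refine fold_point σ L es d (by simpa using hlen)
          (fun e' he' c' hc' => hfr e' (List.mem_cons_of_mem e he')
            c' (List.mem_cons_of_mem c hc')) ?_
        rcases hd with hd | hd
        · rcases List.mem_cons.1 hd with hd | hd
          · exact absurd hd hdc
          · exact Or.inl hd
        · exact Or.inr hd

lemma fresh_list [Infinite D] (s : Finset D) : ∀ n : ℕ,
    ∃ es : List D, es.length = n ∧ es.Nodup ∧ ∀ e ∈ es, e ∉ s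
  | 0 => ⟨[], rfl, List.nodup_nil, by simp⟩
  | n + 1 => by
      obtain ⟨es, h1, h2, h3⟩ := fresh_list s n
      obtain ⟨e, he⟩ := Infinite.exists_notMem_finset (s ∪ es.toFinset)
      simp only [Finset.mem_union, List.mem_toFinset, not_or] at he
      exact ⟨e :: es, by simp [h1], List.nodup_cons.2 ⟨he.2, h2⟩,
        fun x hx => by
          rcases List.mem_cons.1 hx with rfl | hx
          · exact he.1
          · exact h3 x hx⟩

end SSRTAux

open SSRTAux

/-- Lemma 28. -/
theorem nonSufIfl_permutable_second
    {D A G : Type} [DecidableEq D] [Infinite D] [DecidableEq G]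
    [Fintype A] [Fintype G]
    (f : Transduction A G D) (hperm : PermInvariant f)
    (u v w : DataWord A D) (π π' : Equiv.Perm D)
    (h : ∀ d : D, Influencing f d (u ++ v) → π d = π' d) :
    permFO π (threeFac f u v w) =
      threeFac f (permW π u) (permW π v) (permW π' w) := by
  classical
  set σ : Equiv.Perm D := π.symm.trans π' with hσdef
  set M : DataWord A D := permW π u ++ permW π v with hMdef
  have hM : M = permW π (u ++ v) := by rw [hMdef, permW_append]
  have hfix : ∀ e : D, Influencing f e M → σ e = e := by
    intro e he
    rw [hM] at he
    have h2 := influencing_perm hperm π.symm he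
    rw [permW_symm_permW] at h2
    have h3 := h (π.symm e) h2
    show π' (π.symm e) = e
    rw [← h3, Equiv.apply_symm_apply]
  set w₁ : DataWord A D := permW π w with hw1
  have hw2 : permW π' w = permW σ w₁ := by
    rw [hw1]
    simp only [permW, List.map_map]
    refine List.map_congr_left fun p _ => ?_
    show (p.1, π' p.2) = (p.1, σ (π p.2))
    rw [hσdef]
    simp
  set L : List D := (w₁.map Prod.snd).dedup.filter (fun d => decide (σ d ≠ d))
    with hLdef
  have hLmem : ∀ d, d ∈ L ↔ (d ∈ w₁.map Prod.snd ∧ σ d ≠ d) := by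
    intro d
    rw [hLdef]
    simp [List.mem_filter, List.mem_dedup]
  set B : Finset D := (M.map Prod.snd).toFinset ∪ (w₁.map Prod.snd).toFinset ∪
    ((w₁.map Prod.snd).map σ).toFinset with hBdef
  obtain ⟨es, hlen, hnd, hes⟩ := fresh_list B L.length
  have hesM : ∀ e ∈ es, ∀ q ∈ M, q.2 ≠ e := by
    intro e he q hq hc
    refine hes e he ?_
    rw [hBdef]
    refine Finset.mem_union_left _ (Finset.mem_union_left _ ?_)
    rw [List.mem_toFinset, ← hc]
    exact List.mem_map_of_mem (f := Prod.snd) hq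
  have hesW1 : ∀ e ∈ es, ∀ q ∈ w₁, q.2 ≠ e := by
    intro e he q hq hc
    refine hes e he ?_
    rw [hBdef]
    refine Finset.mem_union_left _ (Finset.mem_union_right _ ?_)
    rw [List.mem_toFinset, ← hc]
    exact List.mem_map_of_mem (f := Prod.snd) hq
  have hesW2 : ∀ e ∈ es, ∀ q ∈ permW σ w₁, q.2 ≠ e := by
    intro e he q hq hc
    refine hes e he ?_
    rw [hBdef]
    refine Finset.mem_union_right _ ?_
    rw [List.mem_toFinset, ← hc]
    simp only [permW, List.mem_map] at hq
    obtain ⟨r, hr, rfl⟩ := hq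
    exact List.mem_map_of_mem (f := σ) (List.mem_map_of_mem (f := Prod.snd) hr)
  have hfrL : ∀ e ∈ es, ∀ c ∈ L, e ≠ c ∧ e ≠ σ c := by
    intro e he c hc
    have hcw : c ∈ w₁.map Prod.snd := ((hLmem c).1 hc).1
    constructor
    · intro hce
      refine hes e he ?_
      rw [hBdef]
      refine Finset.mem_union_left _ (Finset.mem_union_right _ ?_)
      rw [List.mem_toFinset, hce]
      exact hcw
    · intro hce
      refine hes e he ?_
      rw [hBdef]
      refine Finset.mem_union_right _ ?_
      rw [List.mem_toFinset, hce]
      exact List.mem_map_of_mem (f := σ) hcw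
  have hLninf : ∀ c ∈ L, ¬ Vulnerable f c M := fun c hc hvul =>
    ((hLmem c).1 hc).2 (hfix c (Or.inr hvul))
  have hLninf2 : ∀ c ∈ L, ¬ Vulnerable f (σ c) M := fun c hc hvul =>
    ((hLmem c).1 hc).2 (σ.injective (hfix (σ c) (Or.inr hvul)))
  have hA := chain f M (L.zip es) w₁
    (fun p hp => hLninf p.1 (List.of_mem_zip hp).1)
    (by rw [List.map_snd_zip (le_of_eq hlen)]; exact hnd)
    (fun p hp q hq => hesM p.2 (List.of_mem_zip hp).2 q hq)
    (fun p hp q hq => hesW1 p.2 (List.of_mem_zip hp).2 q hq)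
  have hB' := chain f M ((L.map σ).zip es) (permW σ w₁)
    (fun p hp => by
      obtain ⟨c, hc, heq⟩ := List.mem_map.1 (List.of_mem_zip hp).1
      rw [← heq]
      exact hLninf2 c hc)
    (by
      rw [List.map_snd_zip
        (le_of_eq (by rw [List.length_map]; exact hlen))]
      exact hnd)
    (fun p hp q hq => hesM p.2 (List.of_mem_zip hp).2 q hq)
    (fun p hp q hq => hesW2 p.2 (List.of_mem_zip hp).2 q hq)
  have hfold : (L.zip es).foldl (fun y p => replaceD y p.1 p.2) w₁
      = ((L.map σ).zip es).foldl (fun y p => replaceD y p.1 p.2) (permW σ w₁) := by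
    rw [foldl_replaceD (L.zip es) w₁, foldl_replaceD ((L.map σ).zip es) (permW σ w₁)]
    simp only [permW, List.map_map]
    refine List.map_congr_left fun q hq => ?_
    show (q.1, List.foldl step q.2 (L.zip es))
      = (q.1, List.foldl step (σ q.2) ((L.map σ).zip es))
    have hmem : q.2 ∈ L ∨ σ q.2 = q.2 := by
      by_cases hq2 : σ q.2 = q.2
      · exact Or.inr hq2
      · exact Or.inl ((hLmem q.2).2 ⟨List.mem_map_of_mem (f := Prod.snd) hq, hq2⟩)
    rw [fold_point σ L es q.2 hlen.symm hfrL hmem]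
  have key : rightFac f M w₁ = rightFac f M (permW σ w₁) := by
    rw [← hA, hfold, hB']
  rw [hMdef] at key
  have keyT := threeFac_eq_of_rightFac f (permW π u) (permW π v) w₁ (permW σ w₁) key
  rw [hw2, ← keyT, hw1, threeFac_perm hperm]
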